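/- Let K be a field of characteristic zero. Let φ = σ(1, α, f) and ψ = σ(2, β, g) be elementary automorphisms of P_n = K[x_1,…,x_n], where f does not involve x_1, and g is a constant, g ∈ K. Then the subgroup ⟨φ, ψ⟩ is metabelian, i.e. its second derived subgroup is trivial. -/

import Mathlib

/-!
Let `A` be the subalgebra of polynomials not involving `x_1`. Both `φ` and `ψ` map `A` onto
itself, and every element `θ` of `⟨φ, ψ⟩` agrees on `A` with a power of `ψ` and sends `x_1` to
`a x_1 + p` with `a ∈ Kˣ`, `p ∈ A`. Powers of `ψ` commute and `Kˣ` is abelian, so every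
commutator fixes `A` pointwise and sends `x_1 ↦ x_1 + p`; composing such automorphisms adds the
translations `p`, so they form an abelian group.
-/

open MvPolynomial

noncomputable section

/-- The group of `K`-algebra automorphisms of the polynomial algebra `P_n = K[x_1,…,x_n]`. -/
abbrev PAut (K : Type*) [Field K] (n : ℕ) :=
  MvPolynomial (Fin n) K ≃ₐ[K] MvPolynomial (Fin n) K

open scoped Pointwise commutatorElement

theorem Subgroup.derivedSeries_two_eq_bot_of_commutator_le {M : Type*} [Group M]
    {G N : Subgroup M} [IsMulCommutative N] (h : ⁅G, G⁆ ≤ N) : derivedSeries G 2 = ⊥ := by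
  have hN : ∀ x ∈ _root_.commutator G, (x : M) ∈ N := fun x hx ↦
    h (G.map_subtype_commutator ▸ Subgroup.mem_map_of_mem G.subtype hx)
  rw [derivedSeries_succ, derivedSeries_one, eq_bot_iff, Subgroup.commutator_le]
  intro x hx y hy
  rw [Subgroup.mem_bot, commutatorElement_eq_one_iff_mul_comm]
  exact Subtype.ext (setLike_mul_comm (hN x hx) (hN y hy))

namespace MvPolynomial

variable {σ K : Type*} [Field K] {θ γ : MvPolynomial σ K ≃ₐ[K] MvPolynomial σ K}
  {s t : Set σ} {q : MvPolynomial σ K}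

theorem algEquiv_C (θ : MvPolynomial σ K ≃ₐ[K] MvPolynomial σ K) (a : K) : θ (C a) = C a :=
  θ.commutes a

theorem apply_eq_of_forall_X_eq (h : ∀ j ∈ s, θ (X j) = γ (X j)) (hq : q ∈ supported K s) :
    θ q = γ q :=
  AlgHom.eqOn_adjoin_iff (φ := (θ : MvPolynomial σ K →ₐ[K] MvPolynomial σ K)) (ψ := γ).2
    (by rintro _ ⟨j, hj, rfl⟩; exact h j hj) hq

theorem apply_mem_supported (h : ∀ j ∈ s, θ (X j) ∈ supported K t) (hq : q ∈ supported K s) :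
    θ q ∈ supported K t :=
  Algebra.adjoin_le (S := (supported K t).comap (θ : MvPolynomial σ K →ₐ[K] MvPolynomial σ K))
    (by rintro _ ⟨j, hj, rfl⟩; exact h j hj) hq

theorem mem_stabilizer_supported (h : ∀ j ∈ s, γ (X j) ∈ supported K s)
    (h' : ∀ j ∈ s, γ⁻¹ (X j) ∈ supported K s) :
    γ ∈ MulAction.stabilizer _ (supported K s : Set (MvPolynomial σ K)) := by
  refine MulAction.mem_stabilizer_set.2 fun q ↦ ⟨fun hq ↦ ?_, apply_mem_supported h⟩
  simpa [AlgEquiv.smul_def] using apply_mem_supported h' hq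

theorem apply_mem_of_mem_stabilizer
    (hγ : γ ∈ MulAction.stabilizer _ (supported K s : Set (MvPolynomial σ K)))
    (hq : q ∈ supported K s) : γ q ∈ supported K s :=
  (MulAction.mem_stabilizer_set.1 hγ q).2 hq

variable (K) in
/-- `θ` is the elementary automorphism `σ(i, α, f)`. -/
structure IsElementaryAut (i : σ) (α : K) (f : MvPolynomial σ K)
    (θ : MvPolynomial σ K ≃ₐ[K] MvPolynomial σ K) : Prop where
  apply_X_self : θ (X i) = C α * X i + f
  apply_X_of_ne : ∀ j, j ≠ i → θ (X j) = X j

namespace IsElementaryAut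

variable {i : σ} {α : K} {f : MvPolynomial σ K}

theorem apply_eq_self (h : IsElementaryAut K i α f θ) (hq : q ∈ supported K {i}ᶜ) : θ q = q :=
  apply_eq_of_forall_X_eq (γ := 1) h.apply_X_of_ne hq

theorem inv (h : IsElementaryAut K i α f θ) (hα : α ≠ 0) (hf : f ∈ supported K {i}ᶜ) :
    IsElementaryAut K i α⁻¹ (-(C α⁻¹ * f)) θ⁻¹ where
  apply_X_self := by
    rw [AlgEquiv.aut_inv, AlgEquiv.symm_apply_eq, map_add, map_neg, map_mul, map_mul,
      h.apply_X_self, h.apply_eq_self hf, algEquiv_C, mul_add, ← mul_assoc, ← C_mul,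
      inv_mul_cancel₀ hα, C_1, one_mul, add_neg_cancel_right]
  apply_X_of_ne j hj := by
    rw [AlgEquiv.aut_inv, AlgEquiv.symm_apply_eq, h.apply_X_of_ne j hj]

theorem apply_X_mem_supported {i₀ : σ} (h : IsElementaryAut K i α f θ) (hi : i₀ ≠ i)
    (hf : f ∈ supported K {i₀}ᶜ) : ∀ j ∈ ({i₀}ᶜ : Set σ), θ (X j) ∈ supported K {i₀}ᶜ := by
  intro j hj
  obtain rfl | hji := eq_or_ne j i
  · rw [h.apply_X_self]
    exact add_mem (mul_mem (algebraMap_mem _ α) (X_mem_supported.2 hj)) hf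
  · rw [h.apply_X_of_ne j hji]
    exact X_mem_supported.2 hj

theorem mem_stabilizer {i₀ : σ} (h : IsElementaryAut K i α f θ) (hi : i₀ ≠ i) (hα : α ≠ 0)
    (hf : f ∈ supported K {i}ᶜ) (hf₀ : f ∈ supported K {i₀}ᶜ) :
    θ ∈ MulAction.stabilizer _ (supported K {i₀}ᶜ : Set (MvPolynomial σ K)) :=
  mem_stabilizer_supported (h.apply_X_mem_supported hi hf₀)
    ((h.inv hα hf).apply_X_mem_supported hi
      (neg_mem (mul_mem (algebraMap_mem _ α⁻¹) hf₀)))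

end IsElementaryAut

variable (K) in
structure IsTriangularAut (i : σ) (γ : MvPolynomial σ K ≃ₐ[K] MvPolynomial σ K) (a : K)
    (θ : MvPolynomial σ K ≃ₐ[K] MvPolynomial σ K) : Prop where
  apply_eq : ∀ q ∈ supported K {i}ᶜ, θ q = γ q
  sub_mem : θ (X i) - C a * X i ∈ supported K {i}ᶜ

variable {i : σ}

theorem IsElementaryAut.isTriangularAut {α : K} {f : MvPolynomial σ K}
    (h : IsElementaryAut K i α f θ) (hf : f ∈ supported K {i}ᶜ) : IsTriangularAut K i 1 α θ where
  apply_eq _ hq := h.apply_eq_self hq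
  sub_mem := by rwa [h.apply_X_self, add_sub_cancel_left]

theorem isTriangularAut_self (h : θ (X i) = X i) : IsTriangularAut K i θ 1 θ where
  apply_eq _ _ := rfl
  sub_mem := by rw [h, C_1, one_mul, sub_self]; exact zero_mem _

namespace IsTriangularAut

variable {θ₁ θ₂ γ₁ γ₂ : MvPolynomial σ K ≃ₐ[K] MvPolynomial σ K} {a a₁ a₂ : K}

theorem mul (h₁ : IsTriangularAut K i γ₁ a₁ θ₁) (h₂ : IsTriangularAut K i γ₂ a₂ θ₂)
    (hγ₁ : γ₁ ∈ MulAction.stabilizer _ (supported K {i}ᶜ : Set (MvPolynomial σ K)))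
    (hγ₂ : γ₂ ∈ MulAction.stabilizer _ (supported K {i}ᶜ : Set (MvPolynomial σ K))) :
    IsTriangularAut K i (γ₁ * γ₂) (a₁ * a₂) (θ₁ * θ₂) where
  apply_eq q hq := by
    rw [AlgEquiv.mul_apply, AlgEquiv.mul_apply, h₂.apply_eq q hq,
      h₁.apply_eq _ (apply_mem_of_mem_stabilizer hγ₂ hq)]
  sub_mem := by
    have e : (θ₁ * θ₂) (X i) - C (a₁ * a₂) * X i =
        C a₂ * (θ₁ (X i) - C a₁ * X i) + θ₁ (θ₂ (X i) - C a₂ * X i) := by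
      rw [AlgEquiv.mul_apply, map_sub, map_mul, map_mul, algEquiv_C]
      ring
    rw [e, h₁.apply_eq _ h₂.sub_mem]
    exact add_mem (mul_mem (algebraMap_mem _ a₂) h₁.sub_mem)
      (apply_mem_of_mem_stabilizer hγ₁ h₂.sub_mem)

theorem inv (h : IsTriangularAut K i γ a θ)
    (hγ : γ ∈ MulAction.stabilizer _ (supported K {i}ᶜ : Set (MvPolynomial σ K))) (ha : a ≠ 0) :
    IsTriangularAut K i γ⁻¹ a⁻¹ θ⁻¹ := by
  have apply_eq : ∀ q ∈ supported K {i}ᶜ, θ⁻¹ q = γ⁻¹ q := fun q hq ↦ by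
    rw [AlgEquiv.aut_inv, AlgEquiv.symm_apply_eq,
      h.apply_eq _ (apply_mem_of_mem_stabilizer (inv_mem hγ) hq), ← AlgEquiv.mul_apply,
      mul_inv_cancel, AlgEquiv.one_apply]
  refine ⟨apply_eq, ?_⟩
  have hCa : C a⁻¹ * C a = (1 : MvPolynomial σ K) := by rw [← C_mul, inv_mul_cancel₀ ha, C_1]
  have e : θ⁻¹ (X i) - C a⁻¹ * X i = -(C a⁻¹ * θ⁻¹ (θ (X i) - C a * X i)) := by
    rw [map_sub, map_mul, algEquiv_C, ← AlgEquiv.mul_apply, inv_mul_cancel, AlgEquiv.one_apply]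
    linear_combination -θ⁻¹ (X i) * hCa
  rw [e, apply_eq _ h.sub_mem]
  exact neg_mem (mul_mem (algebraMap_mem _ a⁻¹)
    (apply_mem_of_mem_stabilizer (inv_mem hγ) h.sub_mem))

end IsTriangularAut

variable (K) in
def translationSubgroup (i : σ) : Subgroup (MvPolynomial σ K ≃ₐ[K] MvPolynomial σ K) where
  carrier := {θ | IsTriangularAut K i 1 1 θ}
  one_mem' := isTriangularAut_self rfl
  mul_mem' h₁ h₂ := by simpa using h₁.mul h₂ (one_mem _) (one_mem _)
  inv_mem' h := by simpa using h.inv (one_mem _) one_ne_zero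

theorem mul_apply_X_of_mem_translationSubgroup {θ₁ θ₂ : MvPolynomial σ K ≃ₐ[K] MvPolynomial σ K}
    (h₁ : θ₁ ∈ translationSubgroup K i) (h₂ : θ₂ ∈ translationSubgroup K i) :
    (θ₁ * θ₂) (X i) = θ₁ (X i) + θ₂ (X i) - X i := by
  have h := h₁.apply_eq _ h₂.sub_mem
  rw [map_sub, map_mul, algEquiv_C, C_1, one_mul, AlgEquiv.one_apply] at h
  rw [AlgEquiv.mul_apply]
  linear_combination h

instance : IsMulCommutative (translationSubgroup K i) := by
  refine .of_setLike_mul_comm fun θ₁ h₁ θ₂ h₂ ↦ AlgEquiv.coe_toAlgHom_injective <|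
    algHom_ext fun j ↦ ?_
  obtain rfl | hj := eq_or_ne j i
  · change (θ₁ * θ₂) (X j) = (θ₂ * θ₁) (X j)
    rw [mul_apply_X_of_mem_translationSubgroup h₁ h₂,
      mul_apply_X_of_mem_translationSubgroup h₂ h₁, add_comm (θ₁ _)]
  · have hX : X j ∈ supported K {i}ᶜ := X_mem_supported.2 hj
    exact ((mul_mem h₁ h₂).apply_eq _ hX).trans ((mul_mem h₂ h₁).apply_eq _ hX).symm

variable (K) in
def triangularSubgroup (i : σ) (Γ : Subgroup (MvPolynomial σ K ≃ₐ[K] MvPolynomial σ K)) :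
    Subgroup (MvPolynomial σ K ≃ₐ[K] MvPolynomial σ K) where
  carrier := {θ | ∃ γ ∈ Γ ⊓ MulAction.stabilizer _ (supported K {i}ᶜ : Set (MvPolynomial σ K)),
    ∃ a ≠ 0, IsTriangularAut K i γ a θ}
  one_mem' := ⟨1, one_mem _, 1, one_ne_zero, isTriangularAut_self rfl⟩
  mul_mem' := by
    rintro θ₁ θ₂ ⟨γ₁, hγ₁, a₁, ha₁, h₁⟩ ⟨γ₂, hγ₂, a₂, ha₂, h₂⟩
    exact ⟨γ₁ * γ₂, mul_mem hγ₁ hγ₂, a₁ * a₂, mul_ne_zero ha₁ ha₂, h₁.mul h₂ hγ₁.2 hγ₂.2⟩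
  inv_mem' := by
    rintro θ ⟨γ, hγ, a, ha, h⟩
    exact ⟨γ⁻¹, inv_mem hγ, a⁻¹, inv_ne_zero ha, h.inv hγ.2 ha⟩

theorem commutator_triangularSubgroup_le (Γ : Subgroup (MvPolynomial σ K ≃ₐ[K] MvPolynomial σ K))
    [IsMulCommutative Γ] :
    ⁅triangularSubgroup K i Γ, triangularSubgroup K i Γ⁆ ≤ translationSubgroup K i := by
  rw [Subgroup.commutator_le]
  rintro θ₁ ⟨γ₁, ⟨hγ₁, hS₁⟩, a₁, ha₁, h₁⟩ θ₂ ⟨γ₂, ⟨hγ₂, hS₂⟩, a₂, ha₂, h₂⟩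
  have h := ((h₁.mul h₂ hS₁ hS₂).mul (h₁.inv hS₁ ha₁) (mul_mem hS₁ hS₂) (inv_mem hS₁)).mul
    (h₂.inv hS₂ ha₂) (mul_mem (mul_mem hS₁ hS₂) (inv_mem hS₁)) (inv_mem hS₂)
  have hγ : γ₁ * γ₂ * γ₁⁻¹ * γ₂⁻¹ = 1 := by
    rw [← commutatorElement_def, commutatorElement_eq_one_iff_mul_comm]
    exact setLike_mul_comm hγ₁ hγ₂
  have ha : a₁ * a₂ * a₁⁻¹ * a₂⁻¹ = 1 := by field_simp
  rw [hγ, ha] at h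
  rwa [commutatorElement_def]

end MvPolynomial

/-- **Statement 15 (Proposition 3).** Let `φ = σ(1, α, f)` and `ψ = σ(2, β, g)` be
elementary automorphisms of `P_n`, where `f` does not involve `x_1` and `g = c ∈ K` is a
constant.  Then `⟨φ, ψ⟩` is metabelian: its second derived subgroup is trivial. -/
theorem bardakov_proposition3 (K : Type*) [Field K]
    (n : ℕ) (hn : 2 ≤ n)
    (α β : K) (hα : α ≠ 0) (hβ : β ≠ 0) (f : MvPolynomial (Fin n) K) (c : K)
    (hf : f ∈ Algebra.adjoin K (MvPolynomial.X '' {j : Fin n | j ≠ ⟨0, by omega⟩}))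
    (φ ψ : PAut K n)
    (hφ1 : φ (X ⟨0, by omega⟩) = C α * X ⟨0, by omega⟩ + f)
    (hφ2 : ∀ j : Fin n, j ≠ ⟨0, by omega⟩ → φ (X j) = X j)
    (hψ1 : ψ (X ⟨1, by omega⟩) = C β * X ⟨1, by omega⟩ + C c)
    (hψ2 : ∀ j : Fin n, j ≠ ⟨1, by omega⟩ → ψ (X j) = X j) :
    derivedSeries (Subgroup.closure {φ, ψ}) 2 = ⊥ := by
  set i₀ : Fin n := ⟨0, by omega⟩
  set i₁ : Fin n := ⟨1, by omega⟩
  have hi : i₀ ≠ i₁ := Fin.ne_of_val_ne zero_ne_one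
  have hφ : IsElementaryAut K i₀ α f φ := ⟨hφ1, hφ2⟩
  have hψ : IsElementaryAut K i₁ β (C c) ψ := ⟨hψ1, hψ2⟩
  have hψS := hψ.mem_stabilizer hi hβ (algebraMap_mem _ c) (algebraMap_mem _ c)
  have hG : Subgroup.closure {φ, ψ} ≤ triangularSubgroup K i₀ (Subgroup.zpowers ψ) := by
    refine (Subgroup.closure_le _).2 (Set.pair_subset ?_ ?_)
    · exact ⟨1, one_mem _, α, hα, hφ.isTriangularAut hf⟩
    · exact ⟨ψ, ⟨Subgroup.mem_zpowers ψ, hψS⟩, 1, one_ne_zero,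
        isTriangularAut_self (hψ.apply_X_of_ne i₀ hi)⟩
  exact Subgroup.derivedSeries_two_eq_bot_of_commutator_le <|
    (Subgroup.commutator_mono hG hG).trans (commutator_triangularSubgroup_le _)
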